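/- arXiv:2202.09104 — 2 statements merged into one kernel-verified Lean document; each statement's English description precedes it below -/
import Mathlib

section
/- For n ≥ 3, let K_n be the arrangement in ℝ^n with defining polynomial Q(K_n) = ∏_{i=1}^n x_i · ∏_{1 ≤ i < j ≤ n} (x_i + x_j), and let B = {ker x_1, …, ker x_n} be its Boolean subarrangement. Then lc(B) = K_n; since |B| = n = r(K_n) and r(∩_{H∈B} H) = n, the set B is an lc-basis of K_n, and consequently K_n is combinatorially formal. -/
open Submodule

section ArrangementBasics

variable {𝕂 : Type*} [Field 𝕂] {V : Type*} [AddCommGroup V] [Module 𝕂 V]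

/-- `H` is a (linear) hyperplane: the kernel of a nonzero linear form. -/
def IsHyperplane (H : Submodule 𝕂 V) : Prop :=
  ∃ f : Module.Dual 𝕂 V, f ≠ 0 ∧ LinearMap.ker f = H

/-- A central arrangement: a finite set of linear hyperplanes. -/
def IsArrangement (A : Set (Submodule 𝕂 V)) : Prop :=
  A.Finite ∧ ∀ H ∈ A, IsHyperplane H

/-- The intersection lattice `L(A)`: all intersections of subsets of `A`
(with the ambient space `⊤ = sInf ∅` included). -/
def interLattice (A : Set (Submodule 𝕂 V)) : Set (Submodule 𝕂 V) :=
  {X | ∃ B ⊆ A, X = sInf B}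

/-- The rank of an intersection: its codimension in the ambient space. -/
noncomputable def rk (X : Submodule 𝕂 V) : ℕ := Module.finrank 𝕂 (V ⧸ X)

/-- The localization `A_X` of `A` at `X`: all hyperplanes of `A` containing `X`. -/
def locz (A : Set (Submodule 𝕂 V)) (X : Submodule 𝕂 V) : Set (Submodule 𝕂 V) :=
  {H | H ∈ A ∧ X ≤ H}

/-- The restriction `A^Z` of `A` to `Z`, an arrangement in (the vector space) `Z`:
the subspaces `Z ∩ H` for `H ∈ A ∖ A_Z`, viewed as submodules of `Z`. -/
def restr (A : Set (Submodule 𝕂 V)) (Z : Submodule 𝕂 V) : Set (Submodule 𝕂 ↥Z) :=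
  {K | ∃ H ∈ A, ¬ Z ≤ H ∧ K = (Z ⊓ H).comap Z.subtype}

/-- `α` is a choice of defining linear forms for the arrangement `A`. -/
def IsDefiningForms (A : Set (Submodule 𝕂 V)) (α : Submodule 𝕂 V → Module.Dual 𝕂 V) : Prop :=
  ∀ H ∈ A, LinearMap.ker (α H) = H

/-- The relation space `F(A)` with respect to the chosen defining forms `α`:
the kernel of `⊕_{H ∈ A} 𝕂·e_H → V*`, `e_H ↦ α_H`, realized as the space of finitely
supported coefficient functions supported on `A` whose linear combination vanishes. -/
noncomputable def relSpace (A : Set (Submodule 𝕂 V)) (α : Submodule 𝕂 V → Module.Dual 𝕂 V) :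
    Submodule 𝕂 (Submodule 𝕂 V →₀ 𝕂) :=
  Finsupp.supported 𝕂 𝕂 A ⊓ LinearMap.ker (Finsupp.linearCombination 𝕂 α)

/-- `F_2(A)`: the span of the elements of `F(A)` of length at most `3`. -/
noncomputable def relSpace2 (A : Set (Submodule 𝕂 V)) (α : Submodule 𝕂 V → Module.Dual 𝕂 V) :
    Submodule 𝕂 (Submodule 𝕂 V →₀ 𝕂) :=
  Submodule.span 𝕂 {c | c ∈ relSpace A α ∧ c.support.card ≤ 3}

/-- `A` is formal if `F_2(A) = F(A)` (for any choice of defining forms). -/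
def IsFormal (A : Set (Submodule 𝕂 V)) : Prop :=
  ∀ α : Submodule 𝕂 V → Module.Dual 𝕂 V,
    IsDefiningForms A α → relSpace2 A α = relSpace A α

end ArrangementBasics


section LineClosure

variable {𝕂 : Type*} [Field 𝕂] {V : Type*} [AddCommGroup V] [Module 𝕂 V]

/-- A subset `B` of the arrangement `A` is line-closed if for every pair
`H, H' ∈ B` one has `A_{H ∩ H'} ⊆ B`. -/
def IsLineClosed (A B : Set (Submodule 𝕂 V)) : Prop :=
  B ⊆ A ∧ ∀ H ∈ B, ∀ H' ∈ B, locz A (H ⊓ H') ⊆ B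

/-- The line closure `lc(B)` of `B` in `A`: the intersection of all line-closed
subsets of `A` containing `B`. -/
def lineClosure (A B : Set (Submodule 𝕂 V)) : Set (Submodule 𝕂 V) :=
  ⋂₀ {C | IsLineClosed A C ∧ B ⊆ C}

end LineClosure

/-- `A` is combinatorially formal: every central arrangement (over any field, in any
finite-dimensional space) whose intersection lattice is isomorphic (as a poset) to
that of `A` is formal. -/
def IsCombinatoriallyFormal {𝕂 : Type*} [Field 𝕂] {V : Type*} [AddCommGroup V] [Module 𝕂 V]
    (A : Set (Submodule 𝕂 V)) : Prop :=
  ∀ (𝕂' : Type) [Field 𝕂'] (ℓ' : ℕ) (B : Set (Submodule 𝕂' (Fin ℓ' → 𝕂'))),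
    IsArrangement B →
    Nonempty (↥(interLattice A) ≃o ↥(interLattice B)) →
    IsFormal B

/-- The arrangement `K_n` in `ℝ^n` with defining polynomial
`∏_{i} x_i · ∏_{i<j} (x_i + x_j)`. -/
def KnArr (n : ℕ) : Set (Submodule ℝ (Fin n → ℝ)) :=
  {H | (∃ i : Fin n, H = LinearMap.ker (LinearMap.proj i : (Fin n → ℝ) →ₗ[ℝ] ℝ)) ∨
       (∃ i j : Fin n, i < j ∧
          H = LinearMap.ker ((LinearMap.proj i : (Fin n → ℝ) →ₗ[ℝ] ℝ) + LinearMap.proj j))}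

/-- The Boolean subarrangement `{ker x_1, …, ker x_n}` of `K_n`. -/
def BooleanArr (n : ℕ) : Set (Submodule ℝ (Fin n → ℝ)) :=
  {H | ∃ i : Fin n, H = LinearMap.ker (LinearMap.proj i : (Fin n → ℝ) →ₗ[ℝ] ℝ)}


section AuxGeneral

variable {𝕂 : Type*} [Field 𝕂] {V : Type*} [AddCommGroup V] [Module 𝕂 V]

/-- The kernel of a nonzero linear form is a coatom in the submodule lattice. -/
theorem aux_isCoatom_ker {f : Module.Dual 𝕂 V} (hf : f ≠ 0) :
    IsCoatom (LinearMap.ker f) := by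
  constructor
  · simpa [LinearMap.ker_eq_top] using hf
  · intro W hW
    obtain ⟨w, hwW, hwf⟩ := SetLike.exists_of_lt hW
    have hfw : f w ≠ 0 := by simpa [LinearMap.mem_ker] using hwf
    rw [eq_top_iff']
    intro v
    have hker : v - (f v / f w) • w ∈ LinearMap.ker f := by
      simp [LinearMap.mem_ker, map_sub, map_smul, div_mul_cancel₀, hfw]
    have h1 : v - (f v / f w) • w ∈ W := hW.le hker
    have h2 : (v - (f v / f w) • w) + (f v / f w) • w ∈ W :=
      W.add_mem h1 (W.smul_mem _ hwW)
    simpa using h2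

theorem aux_mem_interLattice {A : Set (Submodule 𝕂 V)} {H : Submodule 𝕂 V} (hH : H ∈ A) :
    H ∈ interLattice A :=
  ⟨{H}, Set.singleton_subset_iff.2 hH, sInf_singleton.symm⟩

theorem aux_sInf_mem_interLattice {A T : Set (Submodule 𝕂 V)} (hT : T ⊆ A) :
    sInf T ∈ interLattice A := ⟨T, hT, rfl⟩

theorem aux_top_mem_interLattice (A : Set (Submodule 𝕂 V)) :
    (⊤ : Submodule 𝕂 V) ∈ interLattice A :=
  ⟨∅, by simp, by simp⟩

theorem aux_isGLB_interLattice {A : Set (Submodule 𝕂 V)} {T : Set (Submodule 𝕂 V)}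
    (hT : T ⊆ interLattice A) (h0 : sInf T ∈ interLattice A) :
    IsGLB {x : ↥(interLattice A) | ↑x ∈ T} (⟨sInf T, h0⟩ : ↥(interLattice A)) := by
  constructor
  · intro x hx
    exact Subtype.coe_le_coe.1 (sInf_le hx)
  · intro z hz
    refine Subtype.coe_le_coe.1 (le_sInf fun Y hY => ?_)
    exact Subtype.coe_le_coe.2 (hz (show ((⟨Y, hT hY⟩ : ↥(interLattice A)) : Submodule 𝕂 V) ∈ T from hY))

variable {𝕂₂ : Type*} [Field 𝕂₂] {W : Type*} [AddCommGroup W] [Module 𝕂₂ W]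

/-- An order isomorphism of intersection lattices maps hyperplanes of the arrangement
to hyperplanes of the other arrangement. -/
theorem aux_orderIso_image_mem {A₁ : Set (Submodule 𝕂 V)} {A₂ : Set (Submodule 𝕂₂ W)}
    (e : ↥(interLattice A₁) ≃o ↥(interLattice A₂))
    (h2 : ∀ H ∈ A₂, H ≠ (⊤ : Submodule 𝕂₂ W)) {H : Submodule 𝕂 V} (hH : H ∈ A₁)
    (hc : IsCoatom H) :
    ((e ⟨H, aux_mem_interLattice hH⟩ : ↥(interLattice A₂)) : Submodule 𝕂₂ W) ∈ A₂ := by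
  set x : ↥(interLattice A₁) := ⟨H, aux_mem_interLattice hH⟩ with hx
  obtain ⟨T, hT, hTe⟩ := (e x).2
  have hne : ((e x : ↥(interLattice A₂)) : Submodule 𝕂₂ W) ≠ ⊤ := by
    intro htop
    have h1 : e ⟨⊤, aux_top_mem_interLattice A₁⟩ ≤ e x :=
      Subtype.coe_le_coe.1 (by rw [htop]; exact le_top)
    have h2' : (⊤ : Submodule 𝕂 V) ≤ H :=
      Subtype.coe_le_coe.2 (e.le_iff_le.1 h1)
    exact hc.1 (top_le_iff.1 h2')
  obtain ⟨H₂, hH₂⟩ : T.Nonempty := by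
    by_contra h
    rw [Set.not_nonempty_iff_eq_empty] at h
    exact hne (by rw [hTe, h, sInf_empty])
  have hle : ((e x : ↥(interLattice A₂)) : Submodule 𝕂₂ W) ≤ H₂ := hTe ▸ sInf_le hH₂
  rcases eq_or_lt_of_le hle with heq | hlt
  · rw [heq]; exact hT hH₂
  · exfalso
    set z : ↥(interLattice A₂) := ⟨H₂, aux_mem_interLattice (hT hH₂)⟩ with hz
    have hxz : x < e.symm z := by
      rw [← e.lt_iff_lt, e.apply_symm_apply]
      exact Subtype.coe_lt_coe.1 hlt
    have htop : ((e.symm z : ↥(interLattice A₁)) : Submodule 𝕂 V) = ⊤ :=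
      hc.2 _ (Subtype.coe_lt_coe.2 hxz)
    have h3 : e.symm ⟨⊤, aux_top_mem_interLattice A₂⟩ ≤ e.symm z :=
      Subtype.coe_le_coe.1 (by rw [htop]; exact le_top)
    have h4 : (⊤ : Submodule 𝕂₂ W) ≤ H₂ :=
      Subtype.coe_le_coe.2 (e.symm.le_iff_le.1 h3)
    exact h2 H₂ (hT hH₂) (top_le_iff.1 h4)

theorem aux_orderIso_map_sInf {A₁ : Set (Submodule 𝕂 V)} {A₂ : Set (Submodule 𝕂₂ W)}
    (e : ↥(interLattice A₁) ≃o ↥(interLattice A₂))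
    {T : Set (Submodule 𝕂 V)} (hT : T ⊆ interLattice A₁) (h0 : sInf T ∈ interLattice A₁)
    {T' : Set (Submodule 𝕂₂ W)} (hT' : T' ⊆ interLattice A₂) (h0' : sInf T' ∈ interLattice A₂)
    (himg : {x : ↥(interLattice A₂) | ↑x ∈ T'} = e '' {x : ↥(interLattice A₁) | ↑x ∈ T}) :
    ((e ⟨sInf T, h0⟩ : ↥(interLattice A₂)) : Submodule 𝕂₂ W) = sInf T' := by
  have g1 := aux_isGLB_interLattice hT h0
  have g2 := (OrderIso.isGLB_image' (f := e)).2 g1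
  rw [← himg] at g2
  have g3 := aux_isGLB_interLattice hT' h0'
  exact congrArg Subtype.val (g2.unique g3)

end AuxGeneral

section AuxSpan

variable {𝕂 : Type*} [Field 𝕂] {V : Type*} [AddCommGroup V] [Module 𝕂 V]

theorem aux_relSpace2_le (A : Set (Submodule 𝕂 V)) (α : Submodule 𝕂 V → Module.Dual 𝕂 V) :
    relSpace2 A α ≤ relSpace A α :=
  Submodule.span_le.2 fun _ hc => hc.1

theorem aux_relSpace_le_relSpace2
    {A S : Set (Submodule 𝕂 V)} (α : Submodule 𝕂 V → Module.Dual 𝕂 V)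
    (hindep : ∀ l : Submodule 𝕂 V →₀ 𝕂, (∀ H, l H ≠ 0 → H ∈ S) →
      Finsupp.linearCombination 𝕂 α l = 0 → l = 0)
    (hrel : ∀ H ∈ A, H ∉ S → ∃ r : Submodule 𝕂 V →₀ 𝕂,
      r ∈ relSpace A α ∧ r.support.card ≤ 3 ∧ r H = 1 ∧ ∀ K, r K ≠ 0 → K = H ∨ K ∈ S) :
    relSpace A α ≤ relSpace2 A α := by
  classical
  intro c hc
  have hc1 : c ∈ Finsupp.supported 𝕂 𝕂 A := hc.1
  have hc2 : Finsupp.linearCombination 𝕂 α c = 0 := hc.2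
  choose! R hR1 hR2 hR3 hR4 using hrel
  have hcA : ∀ H, c H ≠ 0 → H ∈ A := by
    intro H h
    by_contra hHA
    exact h ((Finsupp.mem_supported' 𝕂 c).1 hc1 H hHA)
  set F : Finset (Submodule 𝕂 V) := c.support.filter (fun H => H ∉ S) with hF
  have hmemF : ∀ H ∈ F, H ∈ A ∧ H ∉ S ∧ c H ≠ 0 := by
    intro H hH
    rw [hF, Finset.mem_filter, Finsupp.mem_support_iff] at hH
    exact ⟨hcA H hH.1, hH.2, hH.1⟩
  set d : Submodule 𝕂 V →₀ 𝕂 := ∑ H ∈ F, c H • R H with hd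
  have hdmem : d ∈ relSpace2 A α := by
    refine Submodule.sum_mem _ fun H hH => Submodule.smul_mem _ _ (Submodule.subset_span ?_)
    obtain ⟨h1, h2, _⟩ := hmemF H hH
    exact ⟨hR1 H h1 h2, hR2 H h1 h2⟩
  have hRapp : ∀ H ∈ F, ∀ K, K ≠ H → K ∉ S → R H K = 0 := by
    intro H hH K hKH hKS
    obtain ⟨h1, h2, _⟩ := hmemF H hH
    by_contra h
    rcases hR4 H h1 h2 K h with h' | h'
    · exact hKH h'
    · exact hKS h'
  have happ : ∀ K, d K = ∑ H ∈ F, c H * R H K := by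
    intro K
    rw [hd, Finsupp.finset_sum_apply]
    simp [Finsupp.smul_apply, smul_eq_mul]
  have hsub : c - d = 0 := by
    apply hindep
    · intro K hK
      by_contra hKS
      apply hK
      rw [Finsupp.sub_apply]
      by_cases hKF : K ∈ F
      · rw [happ K, Finset.sum_eq_single_of_mem K hKF
          (fun H hH hHK => by rw [hRapp H hH K (Ne.symm hHK) hKS, mul_zero]),
          hR3 K (hmemF K hKF).1 (hmemF K hKF).2.1, mul_one, sub_self]
      · have hcK : c K = 0 := by
          by_contra h
          exact hKF (Finset.mem_filter.2 ⟨Finsupp.mem_support_iff.2 h, hKS⟩)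
        have hdK : d K = 0 := by
          rw [happ K]
          refine Finset.sum_eq_zero fun H hH => ?_
          have hne : K ≠ H := fun h => hKF (h ▸ hH)
          rw [hRapp H hH K hne hKS, mul_zero]
        rw [hcK, hdK, sub_self]
    · have hdker : Finsupp.linearCombination 𝕂 α d = 0 := by
        rw [hd, map_sum]
        refine Finset.sum_eq_zero fun H hH => ?_
        obtain ⟨h1, h2, _⟩ := hmemF H hH
        rw [map_smul, LinearMap.mem_ker.1 (hR1 H h1 h2).2, smul_zero]
      rw [map_sub, hc2, hdker, sub_zero]
  have hcd : c = d := by rwa [sub_eq_zero] at hsub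
  rw [hcd]
  exact hdmem

end AuxSpan

section AuxKn

theorem aux_ker_ne {𝕂 : Type*} [Field 𝕂] {V : Type*} [AddCommGroup V] [Module 𝕂 V]
    {f g : V →ₗ[𝕂] 𝕂} (v : V) (h1 : f v = 0) (h2 : g v ≠ 0) :
    LinearMap.ker f ≠ LinearMap.ker g := by
  intro h
  have hv : v ∈ LinearMap.ker f := h1
  rw [h] at hv
  exact h2 hv

variable {n : ℕ}

theorem aux_proj_ne_zero (i : Fin n) :
    (LinearMap.proj i : (Fin n → ℝ) →ₗ[ℝ] ℝ) ≠ 0 := by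
  intro h
  have := congrArg (fun f : (Fin n → ℝ) →ₗ[ℝ] ℝ => f (Pi.single i 1)) h
  simp [LinearMap.proj_apply] at this

theorem aux_sum_ne_zero {i j : Fin n} (hij : i < j) :
    (LinearMap.proj i : (Fin n → ℝ) →ₗ[ℝ] ℝ) + LinearMap.proj j ≠ 0 := by
  intro h
  have := congrArg (fun f : (Fin n → ℝ) →ₗ[ℝ] ℝ => f (Pi.single i 1)) h
  simp [LinearMap.proj_apply, Pi.single_apply, hij.ne'] at this

theorem aux_kerp_ne {i j : Fin n} (hij : i ≠ j) :
    LinearMap.ker (LinearMap.proj i : (Fin n → ℝ) →ₗ[ℝ] ℝ) ≠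
      LinearMap.ker (LinearMap.proj j : (Fin n → ℝ) →ₗ[ℝ] ℝ) := by
  refine aux_ker_ne (Pi.single j 1) ?_ ?_
  · simp [LinearMap.proj_apply, Pi.single_apply, hij.symm]
  · simp [LinearMap.proj_apply, Pi.single_apply]

theorem aux_kerp_ne_kers (i k l : Fin n) (hkl : k < l) :
    LinearMap.ker (LinearMap.proj i : (Fin n → ℝ) →ₗ[ℝ] ℝ) ≠
      LinearMap.ker ((LinearMap.proj k : (Fin n → ℝ) →ₗ[ℝ] ℝ) + LinearMap.proj l) := by
  by_cases hik : i = k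
  · subst hik
    refine aux_ker_ne (Pi.single l 1) ?_ ?_
    · simp [LinearMap.proj_apply, Pi.single_apply, hkl.ne]
    · simp [LinearMap.proj_apply, Pi.single_apply, hkl.ne]
  · by_cases hil : i = l
    · subst hil
      refine aux_ker_ne (Pi.single k 1) ?_ ?_
      · simp [LinearMap.proj_apply, Pi.single_apply, hik, fun h : (k : Fin n) = i => hik h.symm]
      · simp [LinearMap.proj_apply, Pi.single_apply, hkl.ne]
    · refine (aux_ker_ne (Pi.single i 1) ?_ ?_).symm
      · simp [LinearMap.proj_apply, Pi.single_apply,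
          fun h : (i : Fin n) = k => hik h, fun h : (i : Fin n) = l => hil h]
      · simp [LinearMap.proj_apply, Pi.single_apply]

theorem aux_kers_ne_kers (i j k l : Fin n) (hij : i < j) (hkl : k < l)
    (hne : ¬(i = k ∧ j = l)) :
    LinearMap.ker ((LinearMap.proj i : (Fin n → ℝ) →ₗ[ℝ] ℝ) + LinearMap.proj j) ≠
      LinearMap.ker ((LinearMap.proj k : (Fin n → ℝ) →ₗ[ℝ] ℝ) + LinearMap.proj l) := by
  by_cases hik : i = k
  · subst hik
    have hjl : j ≠ l := fun h => hne ⟨rfl, h⟩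
    refine (aux_ker_ne (Pi.single j 1) ?_ ?_).symm
    · simp [LinearMap.proj_apply, Pi.single_apply,
        fun h : (j : Fin n) = i => hij.ne' h, fun h : (j : Fin n) = l => hjl h]
    · simp [LinearMap.proj_apply, Pi.single_apply, hij.ne']
  · rcases lt_or_gt_of_ne hik with h1 | h1
    · -- i < k < l
      refine (aux_ker_ne (Pi.single i 1) ?_ ?_).symm
      · simp [LinearMap.proj_apply, Pi.single_apply,
          fun h : (i : Fin n) = k => h1.ne h, fun h : (i : Fin n) = l => (h1.trans hkl).ne h]
      · simp [LinearMap.proj_apply, Pi.single_apply, hij.ne]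
    · -- k < i < j
      refine aux_ker_ne (Pi.single k 1) ?_ ?_
      · simp [LinearMap.proj_apply, Pi.single_apply,
          fun h : (k : Fin n) = i => h1.ne h, fun h : (k : Fin n) = j => (h1.trans hij).ne h]
      · simp [LinearMap.proj_apply, Pi.single_apply, hkl.ne]

theorem aux_inf_le (i j : Fin n) :
    LinearMap.ker (LinearMap.proj i : (Fin n → ℝ) →ₗ[ℝ] ℝ) ⊓
      LinearMap.ker (LinearMap.proj j : (Fin n → ℝ) →ₗ[ℝ] ℝ) ≤
      LinearMap.ker ((LinearMap.proj i : (Fin n → ℝ) →ₗ[ℝ] ℝ) + LinearMap.proj j) := by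
  rintro v ⟨h1, h2⟩
  have h1' : v i = 0 := h1
  have h2' : v j = 0 := h2
  simp [LinearMap.mem_ker, LinearMap.add_apply, LinearMap.proj_apply, h1', h2']

theorem aux_not_le (i : Fin n) :
    ¬ (sInf {Y : Submodule ℝ (Fin n → ℝ) | ∃ j : Fin n, j ≠ i ∧
        Y = LinearMap.ker (LinearMap.proj j : (Fin n → ℝ) →ₗ[ℝ] ℝ)} ≤
        LinearMap.ker (LinearMap.proj i : (Fin n → ℝ) →ₗ[ℝ] ℝ)) := by
  intro h
  have hmem : Pi.single i (1 : ℝ) ∈ sInf {Y : Submodule ℝ (Fin n → ℝ) | ∃ j : Fin n, j ≠ i ∧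
      Y = LinearMap.ker (LinearMap.proj j : (Fin n → ℝ) →ₗ[ℝ] ℝ)} := by
    rw [Submodule.mem_sInf]
    rintro Y ⟨j, hj, rfl⟩
    simp [LinearMap.mem_ker, LinearMap.proj_apply, Pi.single_apply, hj, fun h : (i : Fin n) = j => hj h.symm]
  have := h hmem
  simp [LinearMap.mem_ker, LinearMap.proj_apply] at this

theorem aux_sInf_Bool (n : ℕ) : sInf (BooleanArr n) = ⊥ := by
  rw [eq_bot_iff]
  intro v hv
  rw [Submodule.mem_sInf] at hv
  rw [Submodule.mem_bot]
  funext i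
  exact hv (LinearMap.ker (LinearMap.proj i : (Fin n → ℝ) →ₗ[ℝ] ℝ)) ⟨i, rfl⟩

end AuxKn

/-- **Example 5.4** (`ex:nonkpioneII`, first part): for `n ≥ 3`, the Boolean
subarrangement `B = {ker x_1, …, ker x_n}` of `K_n` satisfies `lc(B) = K_n`; moreover
`|B| = n = r(K_n)` and `r(∩_{H ∈ B} H) = n`, so `B` is an lc-basis of `K_n`, and
consequently `K_n` is combinatorially formal. -/
theorem Kn_combinatorially_formal (n : ℕ) (hn : 3 ≤ n) :
    lineClosure (KnArr n) (BooleanArr n) = KnArr n ∧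
    (BooleanArr n).ncard = n ∧
    rk (sInf (KnArr n)) = n ∧
    rk (sInf (BooleanArr n)) = n ∧
    IsCombinatoriallyFormal (KnArr n) := by
  classical
  have hBsub : BooleanArr n ⊆ KnArr n := fun H hH => Or.inl hH
  -- Part 1 : line closure
  have c1 : lineClosure (KnArr n) (BooleanArr n) = KnArr n := by
    apply subset_antisymm
    · exact Set.sInter_subset_of_mem ⟨⟨subset_rfl, fun _ _ _ _ _ hK => hK.1⟩, hBsub⟩
    · intro H hH
      rw [lineClosure, Set.mem_sInter]
      rintro C ⟨⟨hCsub, hCcl⟩, hBC⟩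
      rcases hH with ⟨i, rfl⟩ | ⟨i, j, hij, rfl⟩
      · exact hBC ⟨i, rfl⟩
      · exact hCcl _ (hBC ⟨i, rfl⟩) _ (hBC ⟨j, rfl⟩)
          ⟨Or.inr ⟨i, j, hij, rfl⟩, aux_inf_le i j⟩
  -- Part 2 : cardinality
  have c2 : (BooleanArr n).ncard = n := by
    have hr : BooleanArr n = Set.range
        (fun i : Fin n => LinearMap.ker (LinearMap.proj i : (Fin n → ℝ) →ₗ[ℝ] ℝ)) :=
      Set.ext fun H => exists_congr fun i => eq_comm
    have hinj : Function.Injective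
        (fun i : Fin n => LinearMap.ker (LinearMap.proj i : (Fin n → ℝ) →ₗ[ℝ] ℝ)) := by
      intro i j h
      by_contra hne
      exact aux_kerp_ne hne h
    rw [hr, ← Set.image_univ, Set.ncard_image_of_injective _ hinj, Set.ncard_univ,
      Nat.card_eq_fintype_card, Fintype.card_fin]
  -- Parts 3,4 : ranks
  have hbotB : sInf (BooleanArr n) = ⊥ := aux_sInf_Bool n
  have hbotK : sInf (KnArr n) = ⊥ := by
    rw [eq_bot_iff, ← hbotB]
    exact sInf_le_sInf hBsub
  have hrk : ∀ X : Submodule ℝ (Fin n → ℝ), X = ⊥ → rk X = n := by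
    intro X hX
    subst hX
    rw [rk, (Submodule.quotEquivOfEqBot (⊥ : Submodule ℝ (Fin n → ℝ)) rfl).finrank_eq]
    exact Module.finrank_fin_fun ℝ
  -- hyperplanes of KnArr
  have hKnHyp : ∀ H ∈ KnArr n, ∃ f : Module.Dual ℝ (Fin n → ℝ), f ≠ 0 ∧ LinearMap.ker f = H := by
    intro H hH
    rcases hH with ⟨i, rfl⟩ | ⟨i, j, hij, rfl⟩
    · exact ⟨_, aux_proj_ne_zero i, rfl⟩
    · exact ⟨_, aux_sum_ne_zero hij, rfl⟩
  refine ⟨c1, c2, hrk _ hbotK, hrk _ hbotB, ?_⟩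
  -- Part 5 : combinatorial formality
  intro 𝕂' _ ℓ' B' hB' hiso α hα
  obtain ⟨φ⟩ := hiso
  have hB'top : ∀ H ∈ B', H ≠ (⊤ : Submodule 𝕂' (Fin ℓ' → 𝕂')) := by
    intro H hH
    obtain ⟨f, hf, hfk⟩ := hB'.2 H hH
    exact hfk ▸ (aux_isCoatom_ker hf).1
  have hKntop : ∀ H ∈ KnArr n, H ≠ (⊤ : Submodule ℝ (Fin n → ℝ)) := by
    intro H hH
    obtain ⟨f, hf, hfk⟩ := hKnHyp H hH
    exact hfk ▸ (aux_isCoatom_ker hf).1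
  set g : Submodule ℝ (Fin n → ℝ) → Submodule 𝕂' (Fin ℓ' → 𝕂') :=
      fun H => if h : H ∈ interLattice (KnArr n) then
        ((φ ⟨H, h⟩ : ↥(interLattice B')) : Submodule 𝕂' (Fin ℓ' → 𝕂')) else ⊥ with hg
  have hgval : ∀ (H : Submodule ℝ (Fin n → ℝ)) (h : H ∈ interLattice (KnArr n)),
      g H = ((φ ⟨H, h⟩ : ↥(interLattice B')) : Submodule 𝕂' (Fin ℓ' → 𝕂')) := by
    intro H h
    rw [hg]
    exact dif_pos h
  have hgmem : ∀ H ∈ KnArr n, g H ∈ B' := by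
    intro H hH
    rw [hgval H (aux_mem_interLattice hH)]
    apply aux_orderIso_image_mem φ hB'top hH
    obtain ⟨f, hf, hfk⟩ := hKnHyp H hH
    exact hfk ▸ aux_isCoatom_ker hf
  have hglei : ∀ {X Y : Submodule ℝ (Fin n → ℝ)} (hX : X ∈ interLattice (KnArr n))
      (hY : Y ∈ interLattice (KnArr n)), (g X ≤ g Y ↔ X ≤ Y) := by
    intro X Y hX hY
    rw [hgval X hX, hgval Y hY, Subtype.coe_le_coe, φ.le_iff_le, Subtype.mk_le_mk]
  have hginj : ∀ {X Y : Submodule ℝ (Fin n → ℝ)}, X ∈ interLattice (KnArr n) →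
      Y ∈ interLattice (KnArr n) → g X = g Y → X = Y := by
    intro X Y hX hY h
    rw [hgval X hX, hgval Y hY] at h
    exact congrArg Subtype.val (φ.injective (Subtype.ext h))
  have hgsInf : ∀ {T : Set (Submodule ℝ (Fin n → ℝ))}, T ⊆ KnArr n →
      g (sInf T) = sInf (g '' T) := by
    intro T hT
    have himgB : g '' T ⊆ B' := by
      rintro Y ⟨X, hX, rfl⟩
      exact hgmem X (hT hX)
    rw [hgval _ (aux_sInf_mem_interLattice hT)]
    apply aux_orderIso_map_sInf φ (fun Y hY => aux_mem_interLattice (hT hY))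
      (aux_sInf_mem_interLattice hT) (fun Y hY => aux_mem_interLattice (himgB hY))
      (aux_sInf_mem_interLattice himgB)
    ext x
    simp only [Set.mem_setOf_eq, Set.mem_image]
    constructor
    · rintro ⟨X, hXT, hXx⟩
      refine ⟨⟨X, aux_mem_interLattice (hT hXT)⟩, hXT, Subtype.ext ?_⟩
      rw [← hgval X (aux_mem_interLattice (hT hXT))]
      exact hXx
    · rintro ⟨y, hyT, rfl⟩
      exact ⟨↑y, hyT, by rw [hgval _ y.2]⟩
  -- the image of the Boolean subarrangement
  apply le_antisymm (aux_relSpace2_le B' α)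
  apply aux_relSpace_le_relSpace2 (S := g '' BooleanArr n) α
  · -- linear independence
    intro l hl hl0
    ext K
    rw [Finsupp.coe_zero, Pi.zero_apply]
    by_contra hlK
    obtain ⟨Hb, ⟨i, hbi⟩, hgK⟩ := hl K hlK
    subst hbi
    set Ti : Set (Submodule ℝ (Fin n → ℝ)) := {Y | ∃ j : Fin n, j ≠ i ∧
      Y = LinearMap.ker (LinearMap.proj j : (Fin n → ℝ) →ₗ[ℝ] ℝ)} with hTi
    have hTiK : Ti ⊆ KnArr n := by
      rintro Y ⟨j, hj, rfl⟩
      exact Or.inl ⟨j, rfl⟩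
    have hkiKn : LinearMap.ker (LinearMap.proj i : (Fin n → ℝ) →ₗ[ℝ] ℝ) ∈ KnArr n :=
      Or.inl ⟨i, rfl⟩
    have hnle : ¬ (sInf (g '' Ti) ≤ K) := by
      rw [← hgsInf hTiK, ← hgK,
        hglei (aux_sInf_mem_interLattice hTiK) (aux_mem_interLattice hkiKn)]
      exact aux_not_le i
    obtain ⟨v, hv1, hv2⟩ := SetLike.not_le_iff_exists.1 hnle
    have hKB' : K ∈ B' := hgK ▸ hgmem _ hkiKn
    have hαK : α K v ≠ 0 := by
      intro h0
      apply hv2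
      rw [← hα K hKB']
      exact h0
    rw [Finsupp.linearCombination_apply, Finsupp.sum] at hl0
    have h0' := congrArg (fun f : Module.Dual 𝕂' (Fin ℓ' → 𝕂') => f v) hl0
    simp only [LinearMap.sum_apply, LinearMap.smul_apply, LinearMap.zero_apply,
      smul_eq_mul] at h0'
    have hsum : ∑ H ∈ l.support, l H * α H v = l K * α K v := by
      apply Finset.sum_eq_single K
      · intro H hH hHK
        have hH0 : l H ≠ 0 := Finsupp.mem_support_iff.1 hH
        obtain ⟨Hb', ⟨j, hbj⟩, hgH⟩ := hl H hH0
        subst hbj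
        have hji : j ≠ i := by
          intro h
          subst h
          exact hHK (hgH.symm.trans hgK)
        have hvH : v ∈ H := by
          have hmem : g (LinearMap.ker (LinearMap.proj j : (Fin n → ℝ) →ₗ[ℝ] ℝ)) ∈ g '' Ti :=
            ⟨_, ⟨j, hji, rfl⟩, rfl⟩
          rw [← hgH]
          exact sInf_le hmem hv1
        have hHB' : H ∈ B' := by
          rw [← hgH]
          exact hgmem _ (Or.inl ⟨j, rfl⟩)
        have : α H v = 0 := by
          have := hα H hHB' ▸ hvH
          exact this
        rw [this, mul_zero]
      · intro hK
        rw [Finsupp.notMem_support_iff.1 hK, zero_mul]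
    rw [hsum] at h0'
    exact hlK ((mul_eq_zero.1 h0').resolve_right hαK)
  · -- three-term relations
    intro H hHB hHS
    set x := φ.symm ⟨H, aux_mem_interLattice hHB⟩ with hxdef
    have hxKn : (x : Submodule ℝ (Fin n → ℝ)) ∈ KnArr n := by
      apply aux_orderIso_image_mem φ.symm hKntop hHB
      obtain ⟨f, hf, hfk⟩ := hB'.2 H hHB
      exact hfk ▸ aux_isCoatom_ker hf
    have hgx : g ↑x = H := by
      rw [hgval _ x.2]
      have hx' : (⟨(x : Submodule ℝ (Fin n → ℝ)), x.2⟩ : ↥(interLattice (KnArr n))) = x :=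
        Subtype.ext rfl
      rw [hx', hxdef, φ.apply_symm_apply]
    rcases hxKn with ⟨i, hxi⟩ | ⟨i, j, hij, hxij⟩
    · exact absurd (show H ∈ g '' BooleanArr n by
        rw [← hgx, hxi]; exact Set.mem_image_of_mem g ⟨i, rfl⟩) hHS
    · have hkiKn : LinearMap.ker (LinearMap.proj i : (Fin n → ℝ) →ₗ[ℝ] ℝ) ∈ KnArr n :=
        Or.inl ⟨i, rfl⟩
      have hkjKn : LinearMap.ker (LinearMap.proj j : (Fin n → ℝ) →ₗ[ℝ] ℝ) ∈ KnArr n :=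
        Or.inl ⟨j, rfl⟩
      have hsKn : LinearMap.ker ((LinearMap.proj i : (Fin n → ℝ) →ₗ[ℝ] ℝ) + LinearMap.proj j)
          ∈ KnArr n := Or.inr ⟨i, j, hij, rfl⟩
      set Hi := g (LinearMap.ker (LinearMap.proj i : (Fin n → ℝ) →ₗ[ℝ] ℝ)) with hHidef
      set Hj := g (LinearMap.ker (LinearMap.proj j : (Fin n → ℝ) →ₗ[ℝ] ℝ)) with hHjdef
      have hHiB : Hi ∈ B' := hgmem _ hkiKn
      have hHjB : Hj ∈ B' := hgmem _ hkjKn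
      have hHiS : Hi ∈ g '' BooleanArr n := ⟨_, ⟨i, rfl⟩, rfl⟩
      have hHjS : Hj ∈ g '' BooleanArr n := ⟨_, ⟨j, rfl⟩, rfl⟩
      have hgxs : g (LinearMap.ker ((LinearMap.proj i : (Fin n → ℝ) →ₗ[ℝ] ℝ) + LinearMap.proj j))
          = H := by rw [← hxij]; exact hgx
      have hHHi : H ≠ Hi := by
        intro h
        have := hginj (aux_mem_interLattice hsKn) (aux_mem_interLattice hkiKn)
          (hgxs.trans (h.trans hHidef))
        exact aux_kerp_ne_kers i i j hij this.symm
      have hHHj : H ≠ Hj := by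
        intro h
        have := hginj (aux_mem_interLattice hsKn) (aux_mem_interLattice hkjKn)
          (hgxs.trans (h.trans hHjdef))
        exact aux_kerp_ne_kers j i j hij this.symm
      have hHiHj : Hi ≠ Hj := by
        intro h
        exact aux_kerp_ne hij.ne
          (hginj (aux_mem_interLattice hkiKn) (aux_mem_interLattice hkjKn) h)
      have hinfle : Hi ⊓ Hj ≤ H := by
        have hpair : ({LinearMap.ker (LinearMap.proj i : (Fin n → ℝ) →ₗ[ℝ] ℝ),
            LinearMap.ker (LinearMap.proj j : (Fin n → ℝ) →ₗ[ℝ] ℝ)} :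
            Set (Submodule ℝ (Fin n → ℝ))) ⊆ KnArr n :=
          Set.insert_subset_iff.2 ⟨hkiKn, Set.singleton_subset_iff.2 hkjKn⟩
        have h1 := hgsInf hpair
        rw [Set.image_pair, sInf_pair, sInf_pair] at h1
        rw [← hHidef, ← hHjdef] at h1
        rw [← h1, ← hgxs,
          hglei (sInf_pair (a := LinearMap.ker (LinearMap.proj i : (Fin n → ℝ) →ₗ[ℝ] ℝ)) ▸
            aux_sInf_mem_interLattice hpair) (aux_mem_interLattice hsKn)]
        exact aux_inf_le i j
      have hkerHi : LinearMap.ker (α Hi) = Hi := hα Hi hHiB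
      have hkerHj : LinearMap.ker (α Hj) = Hj := hα Hj hHjB
      have hker2 : (⨅ k : Fin 2, LinearMap.ker ((![α Hi, α Hj]) k)) ≤ LinearMap.ker (α H) := by
        intro v hv
        rw [Submodule.mem_iInf] at hv
        have h0 := hv 0
        have h1 := hv 1
        simp only [Matrix.cons_val_zero, Matrix.cons_val_one, Matrix.head_cons] at h0 h1
        rw [hα H hHB]
        apply hinfle
        exact ⟨hkerHi ▸ h0, hkerHj ▸ h1⟩
      have hspan := mem_span_of_iInf_ker_le_ker hker2
      have hrange : Set.range ![α Hi, α Hj] = {α Hi, α Hj} := by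
        ext f
        constructor
        · rintro ⟨k, rfl⟩
          fin_cases k
          · exact Set.mem_insert _ _
          · exact Set.mem_insert_of_mem _ rfl
        · intro hf
          simp only [Set.mem_insert_iff, Set.mem_singleton_iff] at hf
          rcases hf with rfl | rfl
          · exact ⟨0, rfl⟩
          · exact ⟨1, rfl⟩
      rw [hrange] at hspan
      obtain ⟨a, b, hab⟩ := Submodule.mem_span_pair.1 hspan
      refine ⟨Finsupp.single H 1 - Finsupp.single Hi a - Finsupp.single Hj b, ?_, ?_, ?_, ?_⟩
      · refine Submodule.mem_inf.2 ⟨?_, ?_⟩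
        · refine (Finsupp.mem_supported' 𝕂' _).2 fun K hK => ?_
          have h1 : H ≠ K := fun h => hK (by rw [← h]; exact hHB)
          have h2 : Hi ≠ K := fun h => hK (by rw [← h]; exact hHiB)
          have h3 : Hj ≠ K := fun h => hK (by rw [← h]; exact hHjB)
          simp [Finsupp.sub_apply, Finsupp.single_apply, h1, h2, h3]
        · rw [LinearMap.mem_ker, map_sub, map_sub, Finsupp.linearCombination_single,
            Finsupp.linearCombination_single, Finsupp.linearCombination_single, one_smul, ← hab]
          abel
      · have hsub : (Finsupp.single H 1 - Finsupp.single Hi a - Finsupp.single Hj b).support ⊆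
            ({H, Hi, Hj} : Finset (Submodule 𝕂' (Fin ℓ' → 𝕂'))) := by
          intro K hK
          simp only [Finset.mem_insert, Finset.mem_singleton]
          by_contra hc
          push_neg at hc
          obtain ⟨h1, h2, h3⟩ := hc
          apply Finsupp.mem_support_iff.1 hK
          simp [Finsupp.sub_apply, Finsupp.single_apply, Ne.symm h1, Ne.symm h2, Ne.symm h3]
        calc (Finsupp.single H 1 - Finsupp.single Hi a - Finsupp.single Hj b).support.card
            ≤ ({H, Hi, Hj} : Finset (Submodule 𝕂' (Fin ℓ' → 𝕂'))).card :=
              Finset.card_le_card hsub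
          _ ≤ 3 := by
              apply le_trans (Finset.card_insert_le _ _)
              apply Nat.succ_le_succ
              apply le_trans (Finset.card_insert_le _ _)
              simp
      · simp [Finsupp.sub_apply, Finsupp.single_apply, Ne.symm hHHi, Ne.symm hHHj]
      · intro K hK
        by_contra hcon
        push_neg at hcon
        obtain ⟨h1, h2⟩ := hcon
        have h3 : K ≠ Hi := fun h => h2 (by rw [h]; exact hHiS)
        have h4 : K ≠ Hj := fun h => h2 (by rw [h]; exact hHjS)
        apply hK
        simp [Finsupp.sub_apply, Finsupp.single_apply, Ne.symm h1, Ne.symm h3, Ne.symm h4]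
end

section
/- Let A be the arrangement of 11 hyperplanes in ℚ^5 with defining polynomial Q(A) = x_1x_2x_3x_4x_5(x_1+x_3)(x_1+x_3+x_5)(x_1+x_2+x_4)(x_1+x_2+x_4+x_5)(x_1+x_2+x_3+x_5)(x_1+x_2+x_3+x_4+x_5), with the defining forms α_1,…,α_11 in the listed order. Then the relation space F(A) has dimension 6, and the six length-3 relations α_1+α_3−α_6, α_2+α_7−α_10, α_3+α_9−α_11, α_4+α_10−α_11, α_5+α_6−α_7, α_5+α_8−α_9 form a basis of F(A); in particular F_2(A) = F(A), so A is formal. -/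
/-! The first five defining forms are the coordinate forms, so the forms span `(ℚ^5)*` and
`F(A)` has dimension `11 - 5 = 6`; the six listed relations lie in `F(A)` and are linearly
independent, hence a basis, and they have length `3`.

Formality does not depend on the choice of defining forms: any other choice rescales each
`α_i` by a nonzero scalar, and because the eleven hyperplanes are distinct, the relation space
for the new forms is the image of `F(A)` under the corresponding diagonal rescaling, which
preserves the length of a relation. -/

open Submodule

noncomputable section Example51

/-- The `i`-th coordinate form on `ℚ^5`. -/
def pr5 (i : Fin 5) : Module.Dual ℚ (Fin 5 → ℚ) := LinearMap.proj i

/-- The `11` defining forms of the arrangement of Example 5.1, in the order in which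
they appear in `Q(A) = x₁x₂x₃x₄x₅(x₁+x₃)(x₁+x₃+x₅)(x₁+x₂+x₄)(x₁+x₂+x₄+x₅)
(x₁+x₂+x₃+x₅)(x₁+x₂+x₃+x₄+x₅)`. -/
def exForms : Fin 11 → Module.Dual ℚ (Fin 5 → ℚ) :=
  ![pr5 0, pr5 1, pr5 2, pr5 3, pr5 4,
    pr5 0 + pr5 2, pr5 0 + pr5 2 + pr5 4,
    pr5 0 + pr5 1 + pr5 3, pr5 0 + pr5 1 + pr5 3 + pr5 4,
    pr5 0 + pr5 1 + pr5 2 + pr5 4,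
    pr5 0 + pr5 1 + pr5 2 + pr5 3 + pr5 4]

/-- The relation space `F(A)` of the arrangement of Example 5.1: the kernel of
`(c_i) ↦ Σ_i c_i α_i`. -/
def exRelSpace : Submodule ℚ (Fin 11 → ℚ) :=
  LinearMap.ker (Fintype.linearCombination ℚ exForms)

/-- `F_2(A)`: the span of the relations of length at most `3`. -/
def exRelSpace2 : Submodule ℚ (Fin 11 → ℚ) :=
  Submodule.span ℚ
    {c | c ∈ exRelSpace ∧ (Finset.univ.filter fun i => c i ≠ 0).card ≤ 3}

/-- The six length-3 relations `α₁+α₃−α₆`, `α₂+α₇−α₁₀`, `α₃+α₉−α₁₁`, `α₄+α₁₀−α₁₁`,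
`α₅+α₆−α₇`, `α₅+α₈−α₉` (as coefficient vectors). -/
def exRels : Fin 6 → (Fin 11 → ℚ) :=
  ![![1, 0, 1, 0, 0, -1, 0, 0, 0, 0, 0],
    ![0, 1, 0, 0, 0, 0, 1, 0, 0, -1, 0],
    ![0, 0, 1, 0, 0, 0, 0, 0, 1, 0, -1],
    ![0, 0, 0, 1, 0, 0, 0, 0, 0, 1, -1],
    ![0, 0, 0, 0, 1, 1, -1, 0, 0, 0, 0],
    ![0, 0, 0, 0, 1, 0, 0, 1, -1, 0, 0]]

end Example51

open Finset LinearMap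

section DualForms

variable {𝕂 V : Type*} [Field 𝕂] [AddCommGroup V] [Module 𝕂 V]

theorem Module.Dual.exists_ne_zero_smul_eq_of_ker_eq {f g : Module.Dual 𝕂 V}
    (h : ker f = ker g) : ∃ d : 𝕂, d ≠ 0 ∧ g = d • f := by
  have hg : g ∈ span 𝕂 (Set.range fun _ : Unit => f) :=
    mem_span_of_iInf_ker_le_ker (by rw [iInf_const, h])
  obtain ⟨d, rfl⟩ := mem_span_singleton.mp (by simpa using hg)
  by_cases hd : d = 0
  · subst hd
    have hf : f = 0 := by rwa [zero_smul, ker_zero, ker_eq_top] at h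
    exact ⟨1, one_ne_zero, by simp [hf]⟩
  · exact ⟨d, hd, rfl⟩

theorem span_range_eq_top_of_iInf_ker_eq_bot [FiniteDimensional 𝕂 V] {ι : Type*} [Finite ι]
    {L : ι → Module.Dual 𝕂 V} (h : ⨅ i, ker (L i) = ⊥) : span 𝕂 (Set.range L) = ⊤ :=
  eq_top_iff.2 fun _ _ => mem_span_of_iInf_ker_le_ker (h ▸ bot_le)

theorem finrank_ker_fintypeLinearCombination [FiniteDimensional 𝕂 V] {ι : Type*} [Fintype ι]
    {L : ι → Module.Dual 𝕂 V} (h : ⨅ i, ker (L i) = ⊥) :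
    Module.finrank 𝕂 (ker (Fintype.linearCombination 𝕂 L)) =
      Fintype.card ι - Module.finrank 𝕂 V := by
  have := finrank_range_add_finrank_ker (Fintype.linearCombination 𝕂 L)
  rw [Fintype.range_linearCombination, span_range_eq_top_of_iInf_ker_eq_bot h, finrank_top,
    Subspace.dual_finrank_eq, Module.finrank_fintype_fun_eq_card] at this
  omega

end DualForms

section Rescaling

variable {𝕂 M ι : Type*} [Field 𝕂] [AddCommGroup M] [Module 𝕂 M] [Fintype ι]

theorem ker_fintypeLinearCombination_smul (f : ι → M) {d : ι → 𝕂} (hd : ∀ i, d i ≠ 0) :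
    ker (Fintype.linearCombination 𝕂 fun i => d i • f i) =
      (ker (Fintype.linearCombination 𝕂 f)).map (LinearMap.mulLeft 𝕂 d⁻¹) := by
  ext c
  simp only [Submodule.mem_map, mem_ker, Fintype.linearCombination_apply, mulLeft_apply,
    smul_smul]
  constructor
  · intro hc
    refine ⟨d * c, by simpa [mul_comm] using hc, funext fun i => ?_⟩
    simp [inv_mul_cancel_left₀ (hd i)]
  · rintro ⟨w, hw, rfl⟩
    have hdw (i : ι) : (d i)⁻¹ * w i * d i = w i := by field_simp [hd i]
    simpa [hdw] using hw

end Rescaling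

section RelationSpaces

variable {𝕂 V ι : Type*} [Field 𝕂] [AddCommGroup V] [Module 𝕂 V] [Fintype ι]

noncomputable def coeffsOn {σ : Type*} (H : ι → σ) : (ι → 𝕂) →ₗ[𝕂] σ →₀ 𝕂 :=
  Finsupp.lmapDomain 𝕂 𝕂 H ∘ₗ (Finsupp.linearEquivFunOnFinite 𝕂 𝕂 ι).symm.toLinearMap

theorem card_support_coeffsOn [DecidableEq 𝕂] {σ : Type*} {H : ι → σ}
    (hH : Function.Injective H) (c : ι → 𝕂) : #(coeffsOn H c).support = #{i | c i ≠ 0} := by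
  classical
  rw [coeffsOn, comp_apply, Finsupp.lmapDomain_apply, Finsupp.mapDomain_support_of_injective hH,
    card_image_of_injective _ hH]
  congr
  ext
  simp

theorem relSpace_range_eq_map (H : ι → Submodule 𝕂 V) (α : Submodule 𝕂 V → Module.Dual 𝕂 V) :
    relSpace (Set.range H) α = (ker (Fintype.linearCombination 𝕂 (α ∘ H))).map (coeffsOn H) := by
  have hrange : LinearMap.range (coeffsOn H) = Finsupp.supported 𝕂 𝕂 (Set.range H) := by
    rw [coeffsOn, range_comp, LinearEquiv.range, Submodule.map_top, range_eq_map,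
      ← Finsupp.supported_univ, Finsupp.lmapDomain_supported, Set.image_univ]
  have hcomp : Finsupp.linearCombination 𝕂 α ∘ₗ coeffsOn H =
      Fintype.linearCombination 𝕂 (α ∘ H) := by
    ext c
    simp [coeffsOn, Finsupp.linearCombination_mapDomain,
      Finsupp.linearCombination_eq_fintype_linearCombination_apply]
  rw [relSpace, ← hrange, ← hcomp, ker_comp, Submodule.map_comap_eq]

theorem relSpace2_eq_of_span_eq {A : Set (Submodule 𝕂 V)} {α : Submodule 𝕂 V → Module.Dual 𝕂 V}
    {κ : Type*} {s : κ → Submodule 𝕂 V →₀ 𝕂} (hs : ∀ j, #(s j).support ≤ 3)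
    (hspan : span 𝕂 (Set.range s) = relSpace A α) : relSpace2 A α = relSpace A α :=
  le_antisymm (span_le.2 fun _ hc => hc.1) <| by
    rw [← hspan]
    exact span_mono <| Set.range_subset_iff.2 fun j =>
      ⟨(hspan ▸ subset_span ⟨j, rfl⟩ : s j ∈ relSpace A α), hs j⟩

theorem isFormal_of_span_eq_ker [DecidableEq 𝕂] {f : ι → Module.Dual 𝕂 V}
    (hf : Function.Injective fun i => ker (f i)) {κ : Type*} {r : κ → ι → 𝕂}
    (hr : ∀ j, #{i | r j i ≠ 0} ≤ 3)
    (hspan : span 𝕂 (Set.range r) = ker (Fintype.linearCombination 𝕂 f)) :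
    IsFormal {H | ∃ i, H = ker (f i)} := by
  intro α hα
  have hA : {H | ∃ i, H = ker (f i)} = Set.range fun i => ker (f i) :=
    Set.ext fun _ => exists_congr fun _ => eq_comm
  choose d hd0 hd using fun i =>
    Module.Dual.exists_ne_zero_smul_eq_of_ker_eq (hα _ ⟨i, rfl⟩).symm
  have hg : (α ∘ fun i => ker (f i)) = fun i => d i • f i := funext hd
  set Ψ : (ι → 𝕂) →ₗ[𝕂] _ := coeffsOn (fun i => ker (f i)) ∘ₗ mulLeft 𝕂 d⁻¹
  have hrel : span 𝕂 (Set.range (Ψ ∘ r)) = relSpace {H | ∃ i, H = ker (f i)} α := by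
    rw [hA, relSpace_range_eq_map, hg, ker_fintypeLinearCombination_smul f hd0, ← hspan,
      Submodule.map_span, Submodule.map_span, ← Set.image_comp, ← Set.range_comp]
    rfl
  refine relSpace2_eq_of_span_eq (fun j => ?_) hrel
  rw [Function.comp_apply, LinearMap.comp_apply, card_support_coeffsOn hf]
  simpa [hd0] using hr j

end RelationSpaces

section Example51

-- `exPoint i` lies on the `i`-th hyperplane of the arrangement and on no other one.
def exPoint : Fin 11 → Fin 5 → ℚ :=
  ![![0, 1, -3, 3, -2], ![1, 0, -2, 1, 2], ![1, 2, 0, 1, -2], ![-3, -1, -3, 0, -3],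
    ![-2, -3, 3, -2, 0], ![1, 2, -1, -2, 1], ![3, 3, -2, -1, -1], ![1, -3, -3, 2, 1],
    ![2, -3, 1, -1, 2], ![1, -1, 1, 3, -1], ![-1, 3, -2, 3, -3]]

theorem exForms_exPoint_eq_zero_iff (i j : Fin 11) : exForms j (exPoint i) = 0 ↔ j = i := by
  fin_cases i <;> fin_cases j <;> simp [exForms, pr5, exPoint, Matrix.cons_val] <;> norm_num

theorem injective_ker_exForms : Function.Injective fun i => ker (exForms i) := by
  intro i j (hij : ker (exForms i) = ker (exForms j))
  have hi : exPoint i ∈ ker (exForms j) := by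
    rw [← hij, mem_ker, exForms_exPoint_eq_zero_iff]
  rw [mem_ker, exForms_exPoint_eq_zero_iff] at hi
  exact hi.symm

theorem iInf_ker_exForms : ⨅ i, ker (exForms i) = ⊥ := by
  refine eq_bot_iff.2 fun v hv => ?_
  have hcoord (l : Fin 5) : v l = 0 := by
    have := (Submodule.mem_iInf _).1 hv (Fin.castLE (by norm_num) l)
    fin_cases l <;> simpa [exForms, pr5] using this
  exact funext hcoord

theorem finrank_exRelSpace : Module.finrank ℚ exRelSpace = 6 := by
  rw [exRelSpace, finrank_ker_fintypeLinearCombination iInf_ker_exForms]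
  simp

theorem exRels_mem (j : Fin 6) : exRels j ∈ exRelSpace := by
  ext v
  fin_cases j <;>
    simp [Fintype.linearCombination_apply, Fin.sum_univ_succ, exRels, exForms, pr5] <;> ring

theorem linearIndependent_exRels : LinearIndependent ℚ exRels := by
  rw [Fintype.linearIndependent_iff]
  intro g hg
  -- coordinates 0, 1, 3, 7 each occur in a single relation, forcing `g 0 = g 1 = g 3 = g 5 = 0`;
  -- coordinates 2 and 4 then force `g 2 = g 4 = 0`
  have h0 := congrFun hg 0
  have h1 := congrFun hg 1
  have h2 := congrFun hg 2
  have h3 := congrFun hg 3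
  have h4 := congrFun hg 4
  have h7 := congrFun hg 7
  simp [Fin.sum_univ_succ, exRels] at h0 h1 h2 h3 h4 h7
  intro i
  fin_cases i <;> simp <;> linarith

theorem span_exRels : span ℚ (Set.range exRels) = exRelSpace :=
  Submodule.eq_of_le_of_finrank_le (span_le.2 (Set.range_subset_iff.2 exRels_mem)) <| by
    rw [finrank_exRelSpace, finrank_span_eq_card linearIndependent_exRels, Fintype.card_fin]

theorem card_support_exRels_le (j : Fin 6) : #{i | exRels j i ≠ 0} ≤ 3 := by
  revert j
  decide

theorem exRelSpace2_eq : exRelSpace2 = exRelSpace :=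
  le_antisymm (span_le.2 fun _ hc => hc.1) <| by
    rw [← span_exRels]
    exact span_mono <| Set.range_subset_iff.2 fun j => ⟨exRels_mem j, card_support_exRels_le j⟩

end Example51

/-- **Example 5.1** (`ex:3formal-not-hereditiary`, 2-formality of `A`): the relation
space `F(A)` of the given `11`-hyperplane arrangement in `ℚ^5` has dimension `6`, and
the six listed relations of length `3` form a basis of `F(A)`; in particular
`F_2(A) = F(A)` and `A` is formal. -/
theorem example51_formal :
    Module.finrank ℚ ↥exRelSpace = 6 ∧
    (∀ j, exRels j ∈ exRelSpace) ∧
    LinearIndependent ℚ exRels ∧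
    Submodule.span ℚ (Set.range exRels) = exRelSpace ∧
    exRelSpace2 = exRelSpace ∧
    IsFormal {H | ∃ i, H = LinearMap.ker (exForms i)} :=
  ⟨finrank_exRelSpace, exRels_mem, linearIndependent_exRels, span_exRels, exRelSpace2_eq,
    isFormal_of_span_eq_ker injective_ker_exForms card_support_exRels_le span_exRels⟩
end
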